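/- arXiv:2004.01410 — 3 statements merged into one kernel-verified Lean document; each statement's English description precedes it below -/
import Mathlib

section
/- Properties of the tagging meta-program: let Π be a normal logic program over atoms 𝒜 with a distinct name n_r for each rule r ∈ Π, and let X be an answer set of the meta-program T_meta[Π]. Then for every rule r ∈ Π and every atom a ∈ 𝒜: (1) ap(n_r) ∈ X iff r ∈ Π^X iff bl(n_r) ∉ X; (2) if a ∈ X, then ap(n_r) ∈ X for some r ∈ def(a,Π); (3) if a ∉ X, then bl(n_r) ∈ X for all r ∈ def(a,Π), where def(a,Π) = {r ∈ Π | H(r) = a}. -/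
universe u

namespace ASP

/-- The head of a rule: falsity `⊥` (a constraint), a plain atom head,
or a choice head `{a}`. -/
inductive Head (α : Type u) : Type u where
  | bot : Head α
  | atom : α → Head α
  | choice : α → Head α

/-- A (ground) rule with a head, a positive body `B⁺`, a (default-)negated
body `B⁻` (literals `not a`) and a doubly negated body (literals `not not a`). -/
structure Rule (α : Type u) : Type u where
  head : Head α
  pos : Set α
  neg : Set α
  nneg : Set α

abbrev Program (α : Type u) : Type u := Set (Rule α)

def Head.atoms {α : Type u} : Head α → Set α
  | .bot => ∅
  | .atom a => {a}
  | .choice a => {a}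

def Rule.atoms {α : Type u} (r : Rule α) : Set α :=
  r.head.atoms ∪ r.pos ∪ r.neg ∪ r.nneg

def ProgramOver {α : Type u} (P : Program α) (𝒜 : Set α) : Prop :=
  ∀ r ∈ P, r.atoms ⊆ 𝒜

/-- A normal program: each head is an atom or `⊥` and no nested negation occurs. -/
def IsNormal {α : Type u} (P : Program α) : Prop :=
  ∀ r ∈ P, (∀ a : α, r.head ≠ Head.choice a) ∧ r.nneg = ∅

/-- `I ⊨ B(r)`: `B⁺(r) ⊆ I`, `B⁻(r) ∩ I = ∅`, and every doubly negated atom is in `I`. -/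
def bodySat {α : Type u} (I : Set α) (r : Rule α) : Prop :=
  r.pos ⊆ I ∧ (∀ a ∈ r.neg, a ∉ I) ∧ r.nneg ⊆ I

def headSat {α : Type u} (I : Set α) : Head α → Prop
  | .bot => False
  | .atom a => a ∈ I
  | .choice _ => True

def isModel {α : Type u} (I : Set α) (P : Program α) : Prop :=
  ∀ r ∈ P, bodySat I r → headSat I r.head

/-- Head satisfaction in the reduct: choice heads `{a}` (abbreviating rules with a
fresh complement atom) amount to `a ∈ I → a ∈ J`. -/
def headSatReduct {α : Type u} (I J : Set α) : Head α → Prop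
  | .bot => False
  | .atom a => a ∈ J
  | .choice a => a ∈ I → a ∈ J

/-- `J` is a model of the reduct of `P` w.r.t. `I`: a rule belongs to the reduct iff
`I` satisfies its whole body, where a nested literal `not not a` is replaced by `⊤`
if `a ∈ I` and `⊥` otherwise; hence `J` only has to check `B⁺` and `B⁻`. -/
def satReduct {α : Type u} (J I : Set α) (P : Program α) : Prop :=
  ∀ r ∈ P, bodySat I r → (r.pos ⊆ J ∧ ∀ a ∈ r.neg, a ∉ J) → headSatReduct I J r.head

/-- `I` is an answer set of `P` iff `I` is a `⊆`-minimal model of the reduct of `P` w.r.t. `I`. -/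
def isAnswerSet {α : Type u} (P : Program α) (I : Set α) : Prop :=
  isModel I P ∧ ∀ J ⊆ I, satReduct J I P → J = I

def AS {α : Type u} (P : Program α) : Set (Set α) :=
  {I | isAnswerSet P I}

/-- Meta-atoms for the tagging meta-program: the original atoms plus the tagging
atoms `ap(n_r)`, `bl(n_r)`, `ko(n_r)`, `ab_p(n_r)`, `ab_c(α)`, `ab_l(α)`,
where each rule serves as its own (distinct) name `n_r`. -/
inductive MAtom (α : Type u) : Type u where
  | base : α → MAtom α
  | ap : Rule α → MAtom α
  | bl : Rule α → MAtom α
  | ko : Rule α → MAtom α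
  | abp : Rule α → MAtom α
  | abc : α → MAtom α
  | abl : α → MAtom α

def liftHead {α : Type u} : Head α → Head (MAtom α)
  | .bot => .bot
  | .atom a => .atom (MAtom.base a)
  | .choice a => .choice (MAtom.base a)

/-- The tagging meta-program `T_meta[P]`: for every `r ∈ P`, `α₁ ∈ B⁺(r)`,
`α₂ ∈ B⁻(r)` it contains the rules
`H(r) ← ap(n_r), not ko(n_r)`, `ap(n_r) ← B(r)`,
`bl(n_r) ← not α₁`, and `bl(n_r) ← not not α₂`. -/
def Tmeta {α : Type u} (P : Program α) : Program (MAtom α) :=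
  {m | ∃ r ∈ P,
    m = (⟨liftHead r.head, {MAtom.ap r}, {MAtom.ko r}, ∅⟩ : Rule (MAtom α)) ∨
    m = (⟨Head.atom (MAtom.ap r), MAtom.base '' r.pos, MAtom.base '' r.neg,
          MAtom.base '' r.nneg⟩ : Rule (MAtom α)) ∨
    (∃ a ∈ r.pos, m = (⟨Head.atom (MAtom.bl r), ∅, {MAtom.base a}, ∅⟩ : Rule (MAtom α))) ∨
    (∃ a ∈ r.neg, m = (⟨Head.atom (MAtom.bl r), ∅, ∅, {MAtom.base a}⟩ : Rule (MAtom α)))}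

/-- `def(a, P) = {r ∈ P | H(r) = a}`. -/
def defOf {α : Type u} (a : α) (P : Program α) : Program α :=
  {r ∈ P | r.head = Head.atom a}


theorem min_not_mem {α : Type u} {P : Program α} {X : Set (MAtom α)}
    (hX : X ∈ AS (Tmeta P)) (m : MAtom α)
    (h : satReduct (X \ {m}) X (Tmeta P)) : m ∉ X := by
  intro hm
  have heq := hX.2 (X \ {m}) Set.diff_subset h
  have : m ∈ X \ {m} := heq.symm ▸ hm
  exact this.2 rfl

/-- If no meta-rule with head `m₀` has its body satisfied (w.r.t. `X` and
`X \ {m₀}`), then `m₀ ∉ X`. -/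
theorem drop_elim {α : Type u} {P : Program α} {X : Set (MAtom α)}
    (hnorm : IsNormal P) (hX : X ∈ AS (Tmeta P)) (m₀ : MAtom α)
    (h : ∀ m ∈ Tmeta P, bodySat X m →
      (m.pos ⊆ X \ {m₀} ∧ ∀ a ∈ m.neg, a ∉ X \ {m₀}) → m.head ≠ Head.atom m₀) :
    m₀ ∉ X := by
  apply min_not_mem hX
  intro m hm hbX hbJ
  have hd := hX.1 m hm hbX
  have hne := h m hm hbX hbJ
  obtain ⟨r, hr, h1 | h2 | ⟨a, ha, h3⟩ | ⟨a, ha, h4⟩⟩ := hm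
  · subst h1
    cases hh : r.head with
    | bot => simp only [hh, liftHead, headSat] at hd
    | atom b =>
      simp only [hh, liftHead, headSat] at hd
      simp only [hh, liftHead] at hne ⊢
      exact ⟨hd, fun he => hne (by rw [Set.eq_of_mem_singleton he])⟩
    | choice b => exact absurd hh ((hnorm r hr).1 b)
  · subst h2
    simp only [headSat] at hd
    exact ⟨hd, fun he => hne (by rw [Set.eq_of_mem_singleton he])⟩
  · subst h3
    simp only [headSat] at hd
    exact ⟨hd, fun he => hne (by rw [Set.eq_of_mem_singleton he])⟩
  · subst h4
    simp only [headSat] at hd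
    exact ⟨hd, fun he => hne (by rw [Set.eq_of_mem_singleton he])⟩

theorem tmeta_properties' {α : Type u} (P : Program α)
    (hnorm : IsNormal P)
    (X : Set (MAtom α)) (hX : X ∈ AS (Tmeta P)) :
    (∀ r ∈ P,
      (MAtom.ap r ∈ X ↔ bodySat {b | MAtom.base b ∈ X} r) ∧
      (bodySat {b | MAtom.base b ∈ X} r ↔ MAtom.bl r ∉ X)) ∧
    (∀ a : α, MAtom.base a ∈ X → ∃ r ∈ defOf a P, MAtom.ap r ∈ X) ∧
    (∀ a : α, MAtom.base a ∉ X → ∀ r ∈ defOf a P, MAtom.bl r ∈ X) := by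
  set Xb : Set α := {b | MAtom.base b ∈ X} with hXb
  -- correspondence between the lifted body and the original body
  have hbodycorr : ∀ r ∈ P,
      (bodySat X (⟨Head.atom (MAtom.ap r), MAtom.base '' r.pos, MAtom.base '' r.neg,
          MAtom.base '' r.nneg⟩ : Rule (MAtom α)) ↔ bodySat Xb r) := by
    intro r hr
    have hnn : r.nneg = ∅ := (hnorm r hr).2
    constructor
    · rintro ⟨hp, hn, _⟩
      refine ⟨fun a ha => hp ⟨a, ha, rfl⟩, fun a ha => hn _ ⟨a, ha, rfl⟩, by simp [hnn]⟩
    · rintro ⟨hp, hn, _⟩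
      refine ⟨?_, ?_, by simp [hnn]⟩
      · rintro m ⟨a, ha, rfl⟩; exact hp ha
      · rintro m ⟨a, ha, rfl⟩; exact hn a ha
  -- membership of the four rule kinds in Tmeta
  have mem1 : ∀ r ∈ P, (⟨liftHead r.head, {MAtom.ap r}, {MAtom.ko r}, ∅⟩ : Rule (MAtom α))
      ∈ Tmeta P := fun r hr => ⟨r, hr, Or.inl rfl⟩
  have mem2 : ∀ r ∈ P, (⟨Head.atom (MAtom.ap r), MAtom.base '' r.pos, MAtom.base '' r.neg,
      MAtom.base '' r.nneg⟩ : Rule (MAtom α)) ∈ Tmeta P :=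
    fun r hr => ⟨r, hr, Or.inr (Or.inl rfl)⟩
  -- (1a ←) : body satisfied ⇒ ap r ∈ X
  have hap_of_body : ∀ r ∈ P, bodySat Xb r → MAtom.ap r ∈ X := by
    intro r hr hb
    have := hX.1 _ (mem2 r hr) ((hbodycorr r hr).2 hb)
    simpa [headSat] using this
  -- ko r ∉ X for all r (ko never occurs in a head)
  have hko : ∀ r : Rule α, MAtom.ko r ∉ X := by
    intro r
    apply drop_elim hnorm hX
    rintro m ⟨r', hr', h1 | h2 | ⟨a, ha, h3⟩ | ⟨a, ha, h4⟩⟩ _ _ <;>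
      first
        | (subst h2; simp)
        | (subst h3; simp)
        | (subst h4; simp)
        | (subst h1; cases r'.head <;> simp [liftHead])
  -- (1a →) contrapositive : ¬ body ⇒ ap r ∉ X
  have hap_not : ∀ r ∈ P, ¬ bodySat Xb r → MAtom.ap r ∉ X := by
    intro r hr hb
    apply drop_elim hnorm hX
    rintro m ⟨r', hr', h1 | h2 | ⟨a, ha, h3⟩ | ⟨a, ha, h4⟩⟩ hbX hbJ
    · subst h1; cases r'.head <;> simp [liftHead]
    · subst h2
      simp only [ne_eq, Head.atom.injEq, MAtom.ap.injEq]
      rintro rfl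
      exact hb ((hbodycorr _ hr').1 hbX)
    · subst h3; simp
    · subst h4; simp
  -- (1b →) : body satisfied ⇒ bl r ∉ X
  have hbl_not : ∀ r ∈ P, bodySat Xb r → MAtom.bl r ∉ X := by
    intro r hr hb
    apply drop_elim hnorm hX
    rintro m ⟨r', hr', h1 | h2 | ⟨a, ha, h3⟩ | ⟨a, ha, h4⟩⟩ hbX hbJ
    · subst h1; cases r'.head <;> simp [liftHead]
    · subst h2; simp
    · subst h3
      simp only [ne_eq, Head.atom.injEq, MAtom.bl.injEq]
      rintro rfl
      exact hbX.2.1 (MAtom.base a) rfl (hb.1 ha)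
    · subst h4
      simp only [ne_eq, Head.atom.injEq, MAtom.bl.injEq]
      rintro rfl
      exact hb.2.1 a ha (hbX.2.2 rfl)
  -- (1b ←) : ¬ body ⇒ bl r ∈ X
  have hbl_of_not : ∀ r ∈ P, ¬ bodySat Xb r → MAtom.bl r ∈ X := by
    intro r hr hb
    have hnn : r.nneg = ∅ := (hnorm r hr).2
    have : (∃ a ∈ r.pos, a ∉ Xb) ∨ (∃ a ∈ r.neg, a ∈ Xb) := by
      by_contra hc
      push_neg at hc
      exact hb ⟨hc.1, hc.2, by simp [hnn]⟩
    rcases this with ⟨a, ha, hna⟩ | ⟨a, ha, hna⟩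
    · have := hX.1 _ (⟨r, hr, Or.inr (Or.inr (Or.inl ⟨a, ha, rfl⟩))⟩ : _ ∈ Tmeta P)
        ⟨by simp, by simpa [hXb] using hna, by simp⟩
      simpa [headSat] using this
    · have := hX.1 _ (⟨r, hr, Or.inr (Or.inr (Or.inr ⟨a, ha, rfl⟩))⟩ : _ ∈ Tmeta P)
        ⟨by simp, by simp, by simpa [hXb] using hna⟩
      simpa [headSat] using this
  refine ⟨fun r hr => ⟨⟨fun hap => ?_, hap_of_body r hr⟩,
      ⟨hbl_not r hr, fun hbl => ?_⟩⟩, fun a ha => ?_, fun a ha r hrd => ?_⟩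
  · by_contra hb; exact hap_not r hr hb hap
  · by_contra hb; exact hbl (hbl_of_not r hr hb)
  · -- (2)
    by_contra hc
    push_neg at hc
    have : MAtom.base a ∉ X := by
      apply drop_elim hnorm hX
      rintro m ⟨r', hr', h1 | h2 | ⟨b, hb, h3⟩ | ⟨b, hb, h4⟩⟩ hbX hbJ
      · subst h1
        cases hh : r'.head with
        | bot => simp [liftHead]
        | choice b => exact absurd hh ((hnorm r' hr').1 b)
        | atom b =>
          simp only [liftHead, ne_eq, Head.atom.injEq, MAtom.base.injEq]
          rintro rfl
          exact hc r' ⟨hr', hh⟩ (hbJ.1 rfl).1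
      · subst h2; simp
      · subst h3; simp
      · subst h4; simp
    exact this ha
  · -- (3)
    apply hbl_of_not r hrd.1
    intro hb
    have hap := hap_of_body r hrd.1 hb
    have := hX.1 _ (mem1 r hrd.1)
      ⟨by simpa using hap, by simpa using hko r, by simp⟩
    rw [hrd.2] at this
    simp only [liftHead, headSat] at this
    exact ha this

/-- properties of the tagging meta-program: for a normal logic
program `P` over a finite set `𝒜` of atoms and any answer set `X` of `T_meta[P]`:
(1) for every `r ∈ P`, `ap(n_r) ∈ X` iff `r ∈ P^X` iff `bl(n_r) ∉ X`
(where `r ∈ P^X` means `X ⊨ B(r)` on the original atoms);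
(2) if `a ∈ X` then `ap(n_r) ∈ X` for some `r ∈ def(a, P)`;
(3) if `a ∉ X` then `bl(n_r) ∈ X` for all `r ∈ def(a, P)`. -/
theorem tmeta_properties {α : Type u} (P : Program α) (𝒜 : Set α)
    (h𝒜 : 𝒜.Finite) (hnorm : IsNormal P) (hP : ProgramOver P 𝒜)
    (X : Set (MAtom α)) (hX : X ∈ AS (Tmeta P)) :
    (∀ r ∈ P,
      (MAtom.ap r ∈ X ↔ bodySat {b | MAtom.base b ∈ X} r) ∧
      (bodySat {b | MAtom.base b ∈ X} r ↔ MAtom.bl r ∉ X)) ∧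
    (∀ a ∈ 𝒜, MAtom.base a ∈ X → ∃ r ∈ defOf a P, MAtom.ap r ∈ X) ∧
    (∀ a ∈ 𝒜, MAtom.base a ∉ X → ∀ r ∈ defOf a P, MAtom.bl r ∈ X) := by
  obtain ⟨h1, h2, h3⟩ := tmeta_properties' P hnorm X hX
  exact ⟨h1, fun a _ => h2 a, fun a _ => h3 a⟩

end ASP
end

section
/- Correspondence between a program and its tagging meta-program: for a normal logic program Π over atoms 𝒜 with a distinct name n_r for each rule r ∈ Π: (1) if X ∈ AS(Π), then X ∪ {ap(n_r) | r ∈ Π^X} ∪ {bl(n_r) | r ∈ Π\Π^X} ∈ AS(T_meta[Π]); and (2) if Y ∈ AS(T_meta[Π]), then Y ∩ 𝒜 ∈ AS(Π). -/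
universe u

namespace ASP

section Aux
variable {α : Type u}

/-- First kind of meta rule: `H(r) ← ap(n_r), not ko(n_r)`. -/
def mr1 (r : Rule α) : Rule (MAtom α) := ⟨liftHead r.head, {MAtom.ap r}, {MAtom.ko r}, ∅⟩
/-- Second kind: `ap(n_r) ← B(r)`. -/
def mr2 (r : Rule α) : Rule (MAtom α) :=
  ⟨Head.atom (MAtom.ap r), MAtom.base '' r.pos, MAtom.base '' r.neg, MAtom.base '' r.nneg⟩
/-- Third kind: `bl(n_r) ← not α₁`. -/
def mr3 (r : Rule α) (a : α) : Rule (MAtom α) := ⟨Head.atom (MAtom.bl r), ∅, {MAtom.base a}, ∅⟩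
/-- Fourth kind: `bl(n_r) ← not not α₂`. -/
def mr4 (r : Rule α) (a : α) : Rule (MAtom α) := ⟨Head.atom (MAtom.bl r), ∅, ∅, {MAtom.base a}⟩

lemma mr1_mem {P : Program α} {r} (hr : r ∈ P) : mr1 r ∈ Tmeta P := ⟨r, hr, Or.inl rfl⟩
lemma mr2_mem {P : Program α} {r} (hr : r ∈ P) : mr2 r ∈ Tmeta P := ⟨r, hr, Or.inr (Or.inl rfl)⟩
lemma mr3_mem {P : Program α} {r a} (hr : r ∈ P) (ha : a ∈ r.pos) : mr3 r a ∈ Tmeta P :=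
  ⟨r, hr, Or.inr (Or.inr (Or.inl ⟨a, ha, rfl⟩))⟩
lemma mr4_mem {P : Program α} {r a} (hr : r ∈ P) (ha : a ∈ r.neg) : mr4 r a ∈ Tmeta P :=
  ⟨r, hr, Or.inr (Or.inr (Or.inr ⟨a, ha, rfl⟩))⟩

lemma tmeta_cases {P : Program α} {m} (hm : m ∈ Tmeta P) :
    ∃ r ∈ P, m = mr1 r ∨ m = mr2 r ∨ (∃ a ∈ r.pos, m = mr3 r a) ∨ ∃ a ∈ r.neg, m = mr4 r a := by
  obtain ⟨r, hr, h⟩ := hm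
  exact ⟨r, hr, h⟩

/-- For normal rules, failure of body satisfaction has one of two witnesses. -/
lemma not_bodySat {X : Set α} {r : Rule α} (hnn : r.nneg = ∅) (h : ¬ bodySat X r) :
    (∃ a ∈ r.pos, a ∉ X) ∨ ∃ a ∈ r.neg, a ∈ X := by
  by_contra hc
  push_neg at hc
  exact h ⟨fun a ha => hc.1 a ha, fun a ha hax => (hc.2 a ha) hax, by simp [hnn]⟩

end Aux

/-- correspondence between a program and its tagging
meta-program: (1) if `X ∈ AS(P)` then
`X ∪ {ap(n_r) | r ∈ P^X} ∪ {bl(n_r) | r ∈ P \ P^X} ∈ AS(T_meta[P])`;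
(2) if `Y ∈ AS(T_meta[P])` then `Y ∩ 𝒜 ∈ AS(P)`. -/
theorem tmeta_correspondence {α : Type u} (P : Program α) (𝒜 : Set α)
    (h𝒜 : 𝒜.Finite) (hnorm : IsNormal P) (hP : ProgramOver P 𝒜) :
    (∀ X ∈ AS P,
      (MAtom.base '' X ∪ MAtom.ap '' {r ∈ P | bodySat X r}
        ∪ MAtom.bl '' {r ∈ P | ¬ bodySat X r}) ∈ AS (Tmeta P)) ∧
    (∀ Y ∈ AS (Tmeta P), {a ∈ 𝒜 | MAtom.base a ∈ Y} ∈ AS P) := by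
  constructor
  · -- Part (1)
    rintro X ⟨hXmod, hXmin⟩
    set Y : Set (MAtom α) := MAtom.base '' X ∪ MAtom.ap '' {r ∈ P | bodySat X r}
        ∪ MAtom.bl '' {r ∈ P | ¬ bodySat X r} with hYdef
    have hbase : ∀ a : α, MAtom.base a ∈ Y ↔ a ∈ X := by
      intro a; simp [hYdef]
    have hap : ∀ r : Rule α, MAtom.ap r ∈ Y ↔ r ∈ P ∧ bodySat X r := by
      intro r; simp [hYdef]
    have hbl : ∀ r : Rule α, MAtom.bl r ∈ Y ↔ r ∈ P ∧ ¬ bodySat X r := by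
      intro r; simp [hYdef]
    have hko : ∀ r : Rule α, MAtom.ko r ∉ Y := by
      intro r; simp [hYdef]
    -- body of mr2 in Y corresponds to body of r in X
    have hbody2 : ∀ r ∈ P, (bodySat Y (mr2 r) ↔ bodySat X r) := by
      intro r hr
      have hnn := (hnorm r hr).2
      constructor
      · rintro ⟨h1, h2, _⟩
        refine ⟨fun a ha => (hbase a).mp (h1 ⟨a, ha, rfl⟩), fun a ha hax =>
          h2 (MAtom.base a) ⟨a, ha, rfl⟩ ((hbase a).mpr hax), by simp [hnn]⟩
      · rintro ⟨h1, h2, _⟩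
        refine ⟨?_, ?_, by simp [mr2, hnn]⟩
        · rintro m ⟨a, ha, rfl⟩; exact (hbase a).mpr (h1 ha)
        · rintro m ⟨a, ha, rfl⟩ hm; exact h2 a ha ((hbase a).mp hm)
    have hmodel : isModel Y (Tmeta P) := by
      intro m hm hb
      obtain ⟨r, hr, hcase⟩ := tmeta_cases hm
      have hnn := (hnorm r hr).2
      rcases hcase with h1 | h2 | ⟨a, ha, h3⟩ | ⟨a, ha, h4⟩
      · subst h1
        obtain ⟨hb1, _, _⟩ := hb
        have hapY : MAtom.ap r ∈ Y := hb1 rfl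
        obtain ⟨_, hbX⟩ := (hap r).mp hapY
        have hhs := hXmod r hr hbX
        show headSat Y (liftHead r.head)
        cases hh : r.head with
        | bot => rw [hh] at hhs; exact hhs.elim
        | atom a => rw [hh] at hhs; exact (hbase a).mpr hhs
        | choice a => exact absurd hh ((hnorm r hr).1 a)
      · subst h2
        have hbX : bodySat X r := (hbody2 r hr).mp hb
        exact (hap r).mpr ⟨hr, hbX⟩
      · subst h3
        obtain ⟨_, hb2, _⟩ := hb
        have haX : a ∉ X := fun hx => hb2 (MAtom.base a) rfl ((hbase a).mpr hx)
        exact (hbl r).mpr ⟨hr, fun hbX => haX (hbX.1 ha)⟩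
      · subst h4
        obtain ⟨_, _, hb3⟩ := hb
        have haX : a ∈ X := (hbase a).mp (hb3 rfl)
        exact (hbl r).mpr ⟨hr, fun hbX => hbX.2.1 a ha haX⟩
    refine ⟨hmodel, ?_⟩
    intro J hJY hJ
    set X' : Set α := {a | MAtom.base a ∈ J} with hX'def
    have hX'X : X' ⊆ X := fun a ha => (hbase a).mp (hJY ha)
    -- from J satisfying the reduct, whenever `bodySat X r` and the positive body
    -- is in X' (and neg avoids X'), we get `ap r ∈ J` and then head in X'
    have hapJ : ∀ r ∈ P, bodySat X r → r.pos ⊆ X' → MAtom.ap r ∈ J := by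
      intro r hr hbX hpos
      have hnn := (hnorm r hr).2
      refine hJ (mr2 r) (mr2_mem hr) ((hbody2 r hr).mpr hbX) ⟨?_, ?_⟩
      · rintro m ⟨a, ha, rfl⟩; exact hpos ha
      · rintro m ⟨a, ha, rfl⟩ hm
        exact hbX.2.1 a ha ((hbase a).mp (hJY hm))
    have hred : satReduct X' X P := by
      intro r hr hbX ⟨hpos, hneg⟩
      have hApJ : MAtom.ap r ∈ J := hapJ r hr hbX hpos
      have hh1 : headSatReduct Y J (mr1 r).head := by
        refine hJ (mr1 r) (mr1_mem hr)
          ⟨fun m hm => hm ▸ (hap r).mpr ⟨hr, hbX⟩,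
           fun m hm hmy => by rw [hm] at hmy; exact hko r hmy, by simp [mr1]⟩
          ⟨fun m hm => hm ▸ hApJ, fun m hm hmy => hko r (hJY (hm ▸ hmy))⟩
      change headSatReduct Y J (liftHead r.head) at hh1
      have hhs := hXmod r hr hbX
      cases hh : r.head with
      | bot => rw [hh] at hhs; exact hhs.elim
      | atom a => rw [hh] at hh1; exact hh1
      | choice a => exact absurd hh ((hnorm r hr).1 a)
    have hX'eq : X' = X := hXmin X' hX'X hred
    have hYJ : Y ⊆ J := by
      intro y hy
      rcases hy with (⟨a, haX, rfl⟩ | ⟨r, ⟨hr, hbX⟩, rfl⟩) | ⟨r, ⟨hr, hnbX⟩, rfl⟩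
      · show MAtom.base a ∈ J
        rw [← hX'eq] at haX; exact haX
      · exact hapJ r hr hbX (by rw [hX'eq]; exact hbX.1)
      · have hnn := (hnorm r hr).2
        rcases not_bodySat hnn hnbX with ⟨a, ha, haX⟩ | ⟨a, ha, haX⟩
        · refine hJ (mr3 r a) (mr3_mem hr ha)
            ⟨by simp [mr3], ?_, by simp [mr3]⟩
            ⟨by simp [mr3], ?_⟩
          · rintro m hm hmy; rw [hm] at hmy; exact haX ((hbase a).mp hmy)
          · rintro m hm hmy; rw [hm] at hmy; exact haX ((hbase a).mp (hJY hmy))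
        · refine hJ (mr4 r a) (mr4_mem hr ha)
            ⟨by simp [mr4], by simp [mr4], fun m hm => hm ▸ (hbase a).mpr haX⟩
            ⟨by simp [mr4], by simp [mr4]⟩
    exact Set.Subset.antisymm hJY hYJ
  · -- Part (2)
    rintro Y ⟨hYmod, hYmin⟩
    -- Step A: every element of Y is a head atom of some rule of `Tmeta P`
    have hshape : ∀ y ∈ Y,
        (∃ a, y = MAtom.base a ∧ ∃ r ∈ P, r.head = Head.atom a) ∨
        (∃ r ∈ P, y = MAtom.ap r) ∨ (∃ r ∈ P, y = MAtom.bl r) := by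
      set J : Set (MAtom α) := {y ∈ Y |
        (∃ a, y = MAtom.base a ∧ ∃ r ∈ P, r.head = Head.atom a) ∨
        (∃ r ∈ P, y = MAtom.ap r) ∨ (∃ r ∈ P, y = MAtom.bl r)} with hJdef
      have hJY : J ⊆ Y := fun y hy => hy.1
      have hJred : satReduct J Y (Tmeta P) := by
        intro m hm hbY hbJ
        obtain ⟨r, hr, hcase⟩ := tmeta_cases hm
        have hhY := hYmod m hm hbY
        rcases hcase with h1 | h2 | ⟨a, ha, h3⟩ | ⟨a, ha, h4⟩
        · subst h1
          change headSat Y (liftHead r.head) at hhY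
          show headSatReduct Y J (liftHead r.head)
          cases hh : r.head with
          | bot => rw [hh] at hhY; exact hhY.elim
          | atom a => rw [hh] at hhY; exact ⟨hhY, Or.inl ⟨a, rfl, r, hr, hh⟩⟩
          | choice a => exact absurd hh ((hnorm r hr).1 a)
        · subst h2; exact ⟨hhY, Or.inr (Or.inl ⟨r, hr, rfl⟩)⟩
        · subst h3; exact ⟨hhY, Or.inr (Or.inr ⟨r, hr, rfl⟩)⟩
        · subst h4; exact ⟨hhY, Or.inr (Or.inr ⟨r, hr, rfl⟩)⟩
      have := hYmin J hJY hJred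
      intro y hy
      rw [← this] at hy
      exact hy.2
    have hkoY : ∀ r : Rule α, MAtom.ko r ∉ Y := by
      intro r hr
      rcases hshape _ hr with ⟨a, h, _⟩ | ⟨s, _, h⟩ | ⟨s, _, h⟩ <;> exact nomatch h
    have hbase𝒜 : ∀ a : α, MAtom.base a ∈ Y → a ∈ 𝒜 := by
      intro a ha
      rcases hshape _ ha with ⟨b, hb, r, hr, hhead⟩ | ⟨s, _, h⟩ | ⟨s, _, h⟩
      · cases hb
        apply hP r hr
        show a ∈ r.atoms
        simp [Rule.atoms, Head.atoms, hhead]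
      · exact absurd h (by simp)
      · exact absurd h (by simp)
    set X : Set α := {a ∈ 𝒜 | MAtom.base a ∈ Y} with hXdef
    have hXmem : ∀ a : α, a ∈ X ↔ MAtom.base a ∈ Y := by
      intro a
      constructor
      · exact fun h => h.2
      · exact fun h => ⟨hbase𝒜 a h, h⟩
    have hbody2 : ∀ r ∈ P, (bodySat Y (mr2 r) ↔ bodySat X r) := by
      intro r hr
      have hnn := (hnorm r hr).2
      constructor
      · rintro ⟨h1, h2, _⟩
        refine ⟨fun a ha => (hXmem a).mpr (h1 ⟨a, ha, rfl⟩), fun a ha hax =>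
          h2 (MAtom.base a) ⟨a, ha, rfl⟩ ((hXmem a).mp hax), by simp [hnn]⟩
      · rintro ⟨h1, h2, _⟩
        refine ⟨?_, ?_, by simp [mr2, hnn]⟩
        · rintro m ⟨a, ha, rfl⟩; exact (hXmem a).mp (h1 ha)
        · rintro m ⟨a, ha, rfl⟩ hm
          exact h2 a ha ((hXmem a).mpr hm)
    have hapY : ∀ r ∈ P, bodySat X r → MAtom.ap r ∈ Y := by
      intro r hr hbX
      exact hYmod (mr2 r) (mr2_mem hr) ((hbody2 r hr).mpr hbX)
    have hXmod : isModel X P := by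
      intro r hr hbX
      have hhY : headSat Y (mr1 r).head :=
        hYmod (mr1 r) (mr1_mem hr)
          ⟨fun m hm => hm ▸ hapY r hr hbX,
           fun m hm hmy => hkoY r (hm ▸ hmy), by simp [mr1]⟩
      change headSat Y (liftHead r.head) at hhY
      cases hh : r.head with
      | bot => rw [hh] at hhY; exact hhY.elim
      | atom a => rw [hh] at hhY; exact (hXmem a).mpr hhY
      | choice a => exact absurd hh ((hnorm r hr).1 a)
    refine ⟨hXmod, ?_⟩
    intro X' hX'X hX'red
    set J : Set (MAtom α) := MAtom.base '' X'
        ∪ {m | ∃ r ∈ P, m = MAtom.ap r ∧ bodySat X r ∧ r.pos ⊆ X'}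
        ∪ {m ∈ Y | ∃ r : Rule α, m = MAtom.bl r} with hJdef
    have hbaseJ : ∀ a : α, MAtom.base a ∈ J ↔ a ∈ X' := by
      intro a
      constructor
      · rintro ((⟨b, hb, hba⟩ | hm) | ⟨_, s, hs⟩)
        · cases hba; exact hb
        · obtain ⟨r, _, h, _⟩ := hm; exact absurd h (by simp)
        · exact absurd hs (by simp)
      · exact fun h => Or.inl (Or.inl ⟨a, h, rfl⟩)
    have hapJ : ∀ r : Rule α,
        MAtom.ap r ∈ J ↔ r ∈ P ∧ bodySat X r ∧ r.pos ⊆ X' := by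
      intro r
      constructor
      · rintro ((⟨b, _, hba⟩ | hm) | ⟨_, s, hs⟩)
        · exact absurd hba (by simp)
        · obtain ⟨s, hs, h, h1, h2⟩ := hm
          obtain rfl : s = r := by simpa using h.symm
          exact ⟨hs, h1, h2⟩
        · exact absurd hs (by simp)
      · rintro ⟨h1, h2, h3⟩; exact Or.inl (Or.inr ⟨r, h1, rfl, h2, h3⟩)
    have hblJ : ∀ r : Rule α, MAtom.bl r ∈ J ↔ MAtom.bl r ∈ Y := by
      intro r
      constructor
      · rintro ((⟨b, _, hba⟩ | hm) | ⟨hY, _⟩)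
        · exact absurd hba (by simp)
        · obtain ⟨s, _, h, _⟩ := hm; exact absurd h (by simp)
        · exact hY
      · exact fun h => Or.inr ⟨h, r, rfl⟩
    have hJY : J ⊆ Y := by
      rintro m ((⟨a, ha, rfl⟩ | hm) | ⟨hY, _⟩)
      · exact (hXmem a).mp (hX'X ha)
      · obtain ⟨r, hr, rfl, h1, _⟩ := hm
        exact hapY r hr h1
      · exact hY
    have hJred : satReduct J Y (Tmeta P) := by
      intro m hm hbY hbJ
      obtain ⟨r, hr, hcase⟩ := tmeta_cases hm
      rcases hcase with h1 | h2 | ⟨a, ha, h3⟩ | ⟨a, ha, h4⟩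
      · subst h1
        obtain ⟨hbJ1, _⟩ := hbJ
        have hApJ : MAtom.ap r ∈ J := hbJ1 rfl
        obtain ⟨_, hbX, hposX'⟩ := (hapJ r).mp hApJ
        have hnegX' : ∀ a ∈ r.neg, a ∉ X' := fun a ha hax => hbX.2.1 a ha (hX'X hax)
        have hhr := hX'red r hr hbX ⟨hposX', hnegX'⟩
        show headSatReduct Y J (liftHead r.head)
        cases hh : r.head with
        | bot => rw [hh] at hhr; exact hhr.elim
        | atom a => rw [hh] at hhr; exact (hbaseJ a).mpr hhr
        | choice a => exact absurd hh ((hnorm r hr).1 a)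
      · subst h2
        obtain ⟨hbJ1, _⟩ := hbJ
        have hbX : bodySat X r := (hbody2 r hr).mp hbY
        have hposX' : r.pos ⊆ X' := fun a ha =>
          (hbaseJ a).mp (hbJ1 ⟨a, ha, rfl⟩)
        exact (hapJ r).mpr ⟨hr, hbX, hposX'⟩
      · subst h3
        exact (hblJ r).mpr (hYmod _ (mr3_mem hr ha) hbY)
      · subst h4
        exact (hblJ r).mpr (hYmod _ (mr4_mem hr ha) hbY)
    have hJeq : J = Y := hYmin J hJY hJred
    refine Set.Subset.antisymm hX'X ?_
    intro a ha
    have : MAtom.base a ∈ Y := (hXmem a).mp ha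
    rw [← hJeq] at this
    exact (hbaseJ a).mp this

end ASP
end

section
/- Correspondence between concreteness checking and the debugging translation: let Π be a normal logic program over atoms 𝒜, A ⊆ 𝒜, and Î an answer set of omit(Π,A). Then: (1) if X is an answer set of Π ∪ Q_Î^Ā, then X ∪ {ko(n_r) | r ∈ Π_A^c} ∪ {ap(n_r) | r ∈ Π^X} ∪ {bl(n_r) | r ∈ Π\Π^X} is an answer set of T_meta[Π] ∪ T_P[Π] ∪ T_C[Π,𝒜] ∪ T_A[𝒜] ∪ Q_Î^Ā; and (2) if Y is an answer set of T_meta[Π] ∪ T_P[Π] ∪ T_C[Π,𝒜] ∪ T_A[𝒜] ∪ Q_Î^Ā such that Y ∩ AB_A(Π) = ∅, then Y ∩ 𝒜 is an answer set of Π ∪ Q_Î^Ā. -/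
universe u

namespace ASP

def Head.omitted {α : Type u} (A : Set α) : Head α → Prop
  | .bot => False
  | .atom a => a ∈ A
  | .choice a => a ∈ A

def Head.toChoice {α : Type u} : Head α → Head α
  | .bot => .bot
  | .atom a => .choice a
  | .choice a => .choice a

/-- The omission abstraction (on rules possibly carrying nested negation;
for a normal program the `nneg` component is empty). -/
def omitRel {α : Type u} (A : Set α) (r r' : Rule α) : Prop :=
  ((r.pos ∪ r.neg ∪ r.nneg) ∩ A = ∅ ∧ ¬ Head.omitted A r.head ∧ r' = r) ∨
  ((r.pos ∪ r.neg ∪ r.nneg) ∩ A ≠ ∅ ∧ ¬ Head.omitted A r.head ∧ r.head ≠ Head.bot ∧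
    r' = ⟨Head.toChoice r.head, r.pos \ A, r.neg \ A, r.nneg \ A⟩)

def omitA {α : Type u} (P : Program α) (A : Set α) : Program α :=
  {r' | ∃ r ∈ P, omitRel A r r'}

/-- The query program `Q_Î^Ā` on the object level. -/
def queryObj {α : Type u} (Abar Ihat : Set α) : Program α :=
  {r | (∃ a ∈ Ihat, r = (⟨Head.bot, ∅, {a}, ∅⟩ : Rule α)) ∨
       (∃ a ∈ Abar \ Ihat, r = (⟨Head.bot, {a}, ∅, ∅⟩ : Rule α))}

/-- The query program `Q_Î^Ā` on the meta level. -/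
def queryMeta {α : Type u} (Abar Ihat : Set α) : Program (MAtom α) :=
  {r | (∃ a ∈ Ihat, r = (⟨Head.bot, ∅, {MAtom.base a}, ∅⟩ : Rule (MAtom α))) ∨
       (∃ a ∈ Abar \ Ihat, r = (⟨Head.bot, {MAtom.base a}, ∅, ∅⟩ : Rule (MAtom α)))}

/-- `Π_A^c = {r ∈ P | B±(r) ∩ A ≠ ∅, H(r) ∉ A}`. -/
def PiAc {α : Type u} (P : Program α) (A : Set α) : Program α :=
  {r ∈ P | (r.pos ∪ r.neg) ∩ A ≠ ∅ ∧ ¬ Head.omitted A r.head}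

/-- `T_P[P]` (w.r.t. the omitted atoms `A`): for every `r ∈ Π_A^c`,
if `H(r) ≠ ⊥` the rules `ko(n_r).`, `{H(r)} ← ap(n_r)` and
`ab_p(n_r) ← ap(n_r), not H(r)`; if `H(r) = ⊥` the rules `ko(n_r).` and
`ab_p(n_r) ← ap(n_r)`. -/
def TP {α : Type u} (P : Program α) (A : Set α) : Program (MAtom α) :=
  {m | ∃ r ∈ PiAc P A,
    m = (⟨Head.atom (MAtom.ko r), ∅, ∅, ∅⟩ : Rule (MAtom α)) ∨
    (∃ a, r.head = Head.atom a ∧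
      (m = (⟨Head.choice (MAtom.base a), {MAtom.ap r}, ∅, ∅⟩ : Rule (MAtom α)) ∨
       m = (⟨Head.atom (MAtom.abp r), {MAtom.ap r}, {MAtom.base a}, ∅⟩ :
              Rule (MAtom α)))) ∨
    (r.head = Head.bot ∧
      m = (⟨Head.atom (MAtom.abp r), {MAtom.ap r}, ∅, ∅⟩ : Rule (MAtom α)))}

/-- `T_C[P, 𝒜]`: for every `a ∈ 𝒜 \ A` with `def(a, P) = {r₁, …, r_k}` the rules
`{a} ← bl(n_{r₁}), …, bl(n_{r_k})` and `ab_c(a) ← a, bl(n_{r₁}), …, bl(n_{r_k})`. -/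
def TC {α : Type u} (P : Program α) (𝒜 A : Set α) : Program (MAtom α) :=
  {m | ∃ a ∈ 𝒜 \ A,
    m = (⟨Head.choice (MAtom.base a), MAtom.bl '' defOf a P, ∅, ∅⟩ :
           Rule (MAtom α)) ∨
    m = (⟨Head.atom (MAtom.abc a),
           insert (MAtom.base a) (MAtom.bl '' defOf a P), ∅, ∅⟩ : Rule (MAtom α))}

/-- `T_A[𝒜]`: for every `a ∈ 𝒜` the rules `{ab_l(a)} ← not ab_c(a)` and
`a ← ab_l(a)`. -/
def TA {α : Type u} (𝒜 : Set α) : Program (MAtom α) :=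
  {m | ∃ a ∈ 𝒜,
    m = (⟨Head.choice (MAtom.abl a), ∅, {MAtom.abc a}, ∅⟩ : Rule (MAtom α)) ∨
    m = (⟨Head.atom (MAtom.base a), {MAtom.abl a}, ∅, ∅⟩ : Rule (MAtom α))}

/-- `AB_A(P)`, the abnormality atoms. -/
def AB {α : Type u} (P : Program α) (𝒜 A : Set α) : Set (MAtom α) :=
  MAtom.abp '' PiAc P A ∪ MAtom.abc '' (𝒜 \ A) ∪ MAtom.abl '' 𝒜

section Helpers

variable {α : Type u}

lemma support {P : Program α} {I : Set α} (h : isAnswerSet P I) {a : α} (ha : a ∈ I) :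
    ∃ r ∈ P, (r.head = Head.atom a ∨ r.head = Head.choice a) ∧ bodySat I r ∧
      r.pos ⊆ I \ {a} := by
  by_contra hno
  push_neg at hno
  have hJ : satReduct (I \ {a}) I P := by
    intro r hr hb hbj
    have hm := h.1 r hr hb
    cases hhead : r.head with
    | bot => rw [hhead] at hm; exact hm
    | atom b =>
      rw [hhead] at hm
      have hba : b ≠ a := by
        rintro rfl
        exact hno r hr (Or.inl hhead) hb hbj.1
      exact ⟨hm, hba⟩
    | choice b =>
      intro hbI
      have hba : b ≠ a := by
        rintro rfl
        exact hno r hr (Or.inr hhead) hb hbj.1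
      exact ⟨hbI, hba⟩
  have heq := h.2 (I \ {a}) Set.diff_subset hJ
  have : a ∈ I \ {a} := heq.symm ▸ ha
  exact this.2 rfl

end Helpers
section Helpers2
variable {α : Type u}

def YX (P : Program α) (A X : Set α) : Set (MAtom α) :=
  MAtom.base '' X ∪ MAtom.ko '' PiAc P A ∪ MAtom.ap '' {r ∈ P | bodySat X r}
    ∪ MAtom.bl '' {r ∈ P | ¬ bodySat X r}

def TT (P : Program α) (𝒜 A Ihat : Set α) : Program (MAtom α) :=
  Tmeta P ∪ TP P A ∪ TC P 𝒜 A ∪ TA 𝒜 ∪ queryMeta (𝒜 \ A) Ihat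

variable {P : Program α} {𝒜 A X Ihat : Set α} {a : α} {r : Rule α}

@[simp] lemma base_mem_YX : MAtom.base a ∈ YX P A X ↔ a ∈ X := by
  simp [YX]

@[simp] lemma ko_mem_YX : MAtom.ko r ∈ YX P A X ↔ r ∈ PiAc P A := by
  simp [YX]

@[simp] lemma ap_mem_YX : MAtom.ap r ∈ YX P A X ↔ r ∈ P ∧ bodySat X r := by
  simp [YX]

@[simp] lemma bl_mem_YX : MAtom.bl r ∈ YX P A X ↔ r ∈ P ∧ ¬ bodySat X r := by
  simp [YX]

@[simp] lemma abp_notMem_YX : MAtom.abp r ∉ YX P A X := by simp [YX]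
@[simp] lemma abc_notMem_YX : MAtom.abc a ∉ YX P A X := by simp [YX]
@[simp] lemma abl_notMem_YX : MAtom.abl a ∉ YX P A X := by simp [YX]

end Helpers2
section Helpers3
variable {α : Type u} {P : Program α} {𝒜 A X Ihat : Set α} {a : α} {r : Rule α}

lemma normal_head (hnorm : IsNormal P) (hr : r ∈ P) :
    r.head = Head.bot ∨ ∃ a, r.head = Head.atom a := by
  cases hh : r.head with
  | bot => exact Or.inl rfl
  | atom b => exact Or.inr ⟨b, rfl⟩
  | choice b => exact absurd hh ((hnorm r hr).1 b)

lemma X_in (hX : X ∈ AS (P ∪ queryObj (𝒜 \ A) Ihat)) (ha : a ∈ Ihat) : a ∈ X := by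
  by_contra hax
  have hrq : (⟨Head.bot, ∅, {a}, ∅⟩ : Rule α) ∈ P ∪ queryObj (𝒜 \ A) Ihat :=
    Or.inr (Or.inl ⟨a, ha, rfl⟩)
  exact hX.1 _ hrq (by simp [bodySat, hax])

lemma X_out (hX : X ∈ AS (P ∪ queryObj (𝒜 \ A) Ihat)) (ha : a ∈ (𝒜 \ A) \ Ihat) :
    a ∉ X := by
  intro hax
  have hrq : (⟨Head.bot, {a}, ∅, ∅⟩ : Rule α) ∈ P ∪ queryObj (𝒜 \ A) Ihat :=
    Or.inr (Or.inr ⟨a, ha, rfl⟩)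
  exact hX.1 _ hrq (by simp [bodySat, hax])

lemma X_bot (hX : X ∈ AS (P ∪ queryObj (𝒜 \ A) Ihat)) (hr : r ∈ P)
    (hh : r.head = Head.bot) : ¬ bodySat X r := by
  intro hb
  have := hX.1 r (Or.inl hr) hb
  rw [hh] at this; exact this

lemma X_atom (hX : X ∈ AS (P ∪ queryObj (𝒜 \ A) Ihat)) (hr : r ∈ P)
    (hh : r.head = Head.atom a) (hb : bodySat X r) : a ∈ X := by
  have := hX.1 r (Or.inl hr) hb
  rw [hh] at this; exact this

lemma X_supp (hnorm : IsNormal P) (hX : X ∈ AS (P ∪ queryObj (𝒜 \ A) Ihat))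
    (ha : a ∈ X) : ∃ r ∈ defOf a P, bodySat X r := by
  obtain ⟨r, hr, hhead, hb, -⟩ := support hX ha
  rcases hr with hr | hr
  · rcases hhead with hh | hh
    · exact ⟨r, ⟨hr, hh⟩, hb⟩
    · exact absurd hh ((hnorm r hr).1 a)
  · rcases hr with ⟨b, -, rfl⟩ | ⟨b, -, rfl⟩ <;> simp at hhead

end Helpers3
section Helpers4
variable {α : Type u} {P : Program α} {𝒜 A X Ihat : Set α}

lemma YX_model (hnorm : IsNormal P) (hP : ProgramOver P 𝒜)
    (hX : X ∈ AS (P ∪ queryObj (𝒜 \ A) Ihat)) :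
    isModel (YX P A X) (TT P 𝒜 A Ihat) := by
  intro m hm
  rcases hm with (((hm | hm) | hm) | hm) | hm
  · -- Tmeta
    obtain ⟨r, hr, h1 | h2 | ⟨a, ha, h3⟩ | ⟨a, ha, h4⟩⟩ := hm
    · subst h1
      rintro ⟨hap, hko, -⟩
      simp only [Set.singleton_subset_iff, ap_mem_YX] at hap
      have hko' : r ∉ PiAc P A := by
        have := hko (MAtom.ko r) rfl
        rwa [ko_mem_YX] at this
      rcases normal_head hnorm hr with hh | ⟨a, hh⟩
      · exact absurd hap.2 (X_bot hX hr hh)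
      · rw [hh]
        show MAtom.base a ∈ YX P A X
        rw [base_mem_YX]
        exact X_atom hX hr hh hap.2
    · subst h2
      rintro ⟨hpos, hneg, -⟩
      show MAtom.ap r ∈ YX P A X
      rw [ap_mem_YX]
      refine ⟨hr, fun b hb => ?_, fun b hb hbX => ?_, ?_⟩
      · have := hpos ⟨b, hb, rfl⟩
        rwa [base_mem_YX] at this
      · exact hneg (MAtom.base b) ⟨b, hb, rfl⟩ (base_mem_YX.2 hbX)
      · rw [(hnorm r hr).2]; exact Set.empty_subset _
    · subst h3
      rintro ⟨-, hneg, -⟩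
      have haX : a ∉ X := by
        have := hneg (MAtom.base a) rfl
        rwa [base_mem_YX] at this
      show MAtom.bl r ∈ YX P A X
      rw [bl_mem_YX]
      exact ⟨hr, fun hb => haX (hb.1 ha)⟩
    · subst h4
      rintro ⟨-, -, hnn⟩
      simp only [Set.singleton_subset_iff, base_mem_YX] at hnn
      show MAtom.bl r ∈ YX P A X
      rw [bl_mem_YX]
      exact ⟨hr, fun hb => hb.2.1 a ha hnn⟩
  · -- TP
    obtain ⟨r, hrc, h1 | ⟨a, hha, h2 | h3⟩ | ⟨hhb, h4⟩⟩ := hm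
    · subst h1
      rintro -
      show MAtom.ko r ∈ YX P A X
      rw [ko_mem_YX]; exact hrc
    · subst h2
      rintro -
      trivial
    · subst h3
      rintro ⟨hap, hneg, -⟩
      simp only [Set.singleton_subset_iff, ap_mem_YX] at hap
      have haX : a ∉ X := by
        have := hneg (MAtom.base a) rfl
        rwa [base_mem_YX] at this
      exact absurd (X_atom hX hrc.1 hha hap.2) haX
    · subst h4
      rintro ⟨hap, -, -⟩
      simp only [Set.singleton_subset_iff, ap_mem_YX] at hap
      exact absurd hap.2 (X_bot hX hrc.1 hhb)
  · -- TC
    obtain ⟨a, ha, h1 | h2⟩ := hm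
    · subst h1; rintro -; trivial
    · subst h2
      rintro ⟨hpos, -, -⟩
      have haX : a ∈ X := by
        have := hpos (Set.mem_insert _ _)
        rwa [base_mem_YX] at this
      obtain ⟨r, hrd, hbr⟩ := X_supp hnorm hX haX
      have hbl : MAtom.bl r ∈ YX P A X :=
        hpos (Set.mem_insert_of_mem _ ⟨r, hrd, rfl⟩)
      rw [bl_mem_YX] at hbl
      exact absurd hbr hbl.2
  · -- TA
    obtain ⟨a, ha, h1 | h2⟩ := hm
    · subst h1; rintro -; trivial
    · subst h2
      rintro ⟨hpos, -, -⟩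
      exact absurd (hpos rfl) abl_notMem_YX
  · -- queryMeta
    obtain ⟨a, ha, h1⟩ | ⟨a, ha, h1⟩ := hm
    · subst h1
      rintro ⟨-, hneg, -⟩
      have := hneg (MAtom.base a) rfl
      rw [base_mem_YX] at this
      exact this (X_in hX ha)
    · subst h1
      rintro ⟨hpos, -, -⟩
      have := hpos rfl
      rw [base_mem_YX] at this
      exact X_out hX ha this

end Helpers4
section Helpers5
variable {α : Type u} {P : Program α} {𝒜 A X Ihat : Set α} {m : Rule (MAtom α)}

lemma memTT_meta (h : m ∈ Tmeta P) : m ∈ TT P 𝒜 A Ihat :=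
  Or.inl (Or.inl (Or.inl (Or.inl h)))
lemma memTT_TP (h : m ∈ TP P A) : m ∈ TT P 𝒜 A Ihat :=
  Or.inl (Or.inl (Or.inl (Or.inr h)))
lemma memTT_TC (h : m ∈ TC P 𝒜 A) : m ∈ TT P 𝒜 A Ihat :=
  Or.inl (Or.inl (Or.inr h))
lemma memTT_TA (h : m ∈ TA 𝒜) : m ∈ TT P 𝒜 A Ihat := Or.inl (Or.inr h)
lemma memTT_qm (h : m ∈ queryMeta (𝒜 \ A) Ihat) : m ∈ TT P 𝒜 A Ihat := Or.inr h

lemma YX_min (hnorm : IsNormal P)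
    (hX : X ∈ AS (P ∪ queryObj (𝒜 \ A) Ihat)) :
    ∀ J ⊆ YX P A X, satReduct J (YX P A X) (TT P 𝒜 A Ihat) → J = YX P A X := by
  intro J hJ hsat
  set JX : Set α := {a | MAtom.base a ∈ J} with hJXdef
  have hJXsub : JX ⊆ X := fun a ha => base_mem_YX.1 (hJ ha)
  -- ap r ∈ J whenever the body holds w.r.t. JX
  have hapJ : ∀ r ∈ P, bodySat X r → r.pos ⊆ JX → (∀ a ∈ r.neg, a ∉ JX) →
      MAtom.ap r ∈ J := by
    intro r hr hb hposJ hnegJ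
    have hmem : (⟨Head.atom (MAtom.ap r), MAtom.base '' r.pos, MAtom.base '' r.neg,
        MAtom.base '' r.nneg⟩ : Rule (MAtom α)) ∈ TT P 𝒜 A Ihat :=
      memTT_meta ⟨r, hr, Or.inr (Or.inl rfl)⟩
    refine hsat _ hmem ⟨?_, ?_, ?_⟩ ⟨?_, ?_⟩
    · rintro - ⟨b, hb', rfl⟩
      exact base_mem_YX.2 (hb.1 hb')
    · rintro - ⟨b, hb', rfl⟩ hbY
      exact hb.2.1 b hb' (base_mem_YX.1 hbY)
    · rw [(hnorm r hr).2]; simp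
    · rintro - ⟨b, hb', rfl⟩
      exact hposJ hb'
    · rintro - ⟨b, hb', rfl⟩ hbJ
      exact hnegJ b hb' hbJ
  -- JX models the reduct of the object program
  have hred : satReduct JX X (P ∪ queryObj (𝒜 \ A) Ihat) := by
    intro r hr hb hbj
    rcases hr with hr | hr
    · have hap : MAtom.ap r ∈ J := hapJ r hr hb hbj.1 hbj.2
      by_cases hrc : r ∈ PiAc P A
      · rcases normal_head hnorm hr with hh | ⟨a, hh⟩
        · exact absurd hb (X_bot hX hr hh)
        · rw [hh]
          have hmem : (⟨Head.choice (MAtom.base a), {MAtom.ap r}, ∅, ∅⟩ :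
              Rule (MAtom α)) ∈ TT P 𝒜 A Ihat :=
            memTT_TP ⟨r, hrc, Or.inr (Or.inl ⟨a, hh, Or.inl rfl⟩)⟩
          have := hsat _ hmem
            ⟨Set.singleton_subset_iff.2 (ap_mem_YX.2 ⟨hr, hb⟩), by simp, by simp⟩
            ⟨Set.singleton_subset_iff.2 hap, by simp⟩
          exact this (base_mem_YX.2 (X_atom hX hr hh hb))
      · have hmem : (⟨liftHead r.head, {MAtom.ap r}, {MAtom.ko r}, ∅⟩ :
            Rule (MAtom α)) ∈ TT P 𝒜 A Ihat :=
          memTT_meta ⟨r, hr, Or.inl rfl⟩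
        have hres := hsat _ hmem
          ⟨Set.singleton_subset_iff.2 (ap_mem_YX.2 ⟨hr, hb⟩),
           by rintro x rfl h; exact hrc (ko_mem_YX.1 h), by simp⟩
          ⟨Set.singleton_subset_iff.2 hap,
           by rintro x rfl h; exact hrc (ko_mem_YX.1 (hJ h))⟩
        rcases normal_head hnorm hr with hh | ⟨a, hh⟩
        · rw [hh] at hres; exact hres.elim
        · rw [hh] at hres ⊢; exact hres
    · rcases hr with ⟨a, ha, rfl⟩ | ⟨a, ha, rfl⟩
      · exact absurd (X_in hX ha) (hb.2.1 a rfl)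
      · exact absurd (hb.1 rfl) (X_out hX ha)
  have hJXeq : JX = X := hX.2 JX hJXsub hred
  -- Y ⊆ J
  have hYJ : YX P A X ⊆ J := by
    rintro m (((⟨a, ha, rfl⟩ | ⟨r, hr, rfl⟩) | ⟨r, hr, rfl⟩) | ⟨r, hr, rfl⟩)
    · rw [← hJXeq] at ha; exact ha
    · exact hsat _ (memTT_TP ⟨r, hr, Or.inl rfl⟩) (by simp [bodySat]) (by simp)
    · obtain ⟨hr, hb⟩ := hr
      exact hapJ r hr hb (by rw [hJXeq]; exact hb.1)
        (by rw [hJXeq]; exact hb.2.1)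
    · obtain ⟨hr, hnb⟩ := hr
      have hnneg : r.nneg = ∅ := (hnorm r hr).2
      by_cases hps : r.pos ⊆ X
      · have hex : ∃ a ∈ r.neg, a ∈ X := by
          by_contra hno
          push_neg at hno
          exact hnb ⟨hps, hno, by rw [hnneg]; simp⟩
        obtain ⟨a, han, haX⟩ := hex
        have hmem : (⟨Head.atom (MAtom.bl r), ∅, ∅, {MAtom.base a}⟩ :
            Rule (MAtom α)) ∈ TT P 𝒜 A Ihat :=
          memTT_meta ⟨r, hr, Or.inr (Or.inr (Or.inr ⟨a, han, rfl⟩))⟩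
        exact hsat _ hmem
          ⟨by simp, by simp, Set.singleton_subset_iff.2 (base_mem_YX.2 haX)⟩
          ⟨by simp, by simp⟩
      · obtain ⟨a, hap', haX⟩ := Set.not_subset.1 hps
        have hmem : (⟨Head.atom (MAtom.bl r), ∅, {MAtom.base a}, ∅⟩ :
            Rule (MAtom α)) ∈ TT P 𝒜 A Ihat :=
          memTT_meta ⟨r, hr, Or.inr (Or.inr (Or.inl ⟨a, hap', rfl⟩))⟩
        exact hsat _ hmem
          ⟨by simp, by rintro x rfl h; exact haX (base_mem_YX.1 h), by simp⟩
          ⟨by simp, by rintro x rfl h; exact haX (base_mem_YX.1 (hJ h))⟩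
  exact Set.Subset.antisymm hJ hYJ

end Helpers5
section Helpers6
variable {α : Type u} {P : Program α} {𝒜 A Ihat : Set α} {a : α} {r : Rule α}

lemma head_mem_A (hP : ProgramOver P 𝒜) (hr : r ∈ P) (hh : r.head = Head.atom a) :
    a ∈ 𝒜 := hP r hr (Or.inl (Or.inl (Or.inl (by rw [hh]; exact rfl))))

lemma pos_mem_A (hP : ProgramOver P 𝒜) (hr : r ∈ P) (ha : a ∈ r.pos) : a ∈ 𝒜 :=
  hP r hr (Or.inl (Or.inl (Or.inr ha)))

lemma neg_mem_A (hP : ProgramOver P 𝒜) (hr : r ∈ P) (ha : a ∈ r.neg) : a ∈ 𝒜 :=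
  hP r hr (Or.inl (Or.inr ha))

lemma Ihat_sub (hnorm : IsNormal P) (hP : ProgramOver P 𝒜)
    (hIhat : Ihat ∈ AS (omitA P A)) : Ihat ⊆ 𝒜 \ A := by
  intro a ha
  obtain ⟨r', hr', hhead, -, -⟩ := support hIhat ha
  obtain ⟨r, hr, hrel⟩ := hr'
  rcases hrel with ⟨-, hnom, rfl⟩ | ⟨-, hnom, hnbot, rfl⟩
  · rcases normal_head hnorm hr with hh | ⟨b, hh⟩
    · rw [hh] at hhead; rcases hhead with h | h <;> exact absurd h (by simp)
    · rw [hh] at hhead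
      have hba : b = a := by
        rcases hhead with h | h
        · exact Head.atom.inj h
        · exact absurd h (by simp)
      subst hba
      rw [hh] at hnom
      exact ⟨head_mem_A hP hr hh, hnom⟩
  · rcases normal_head hnorm hr with hh | ⟨b, hh⟩
    · exact absurd hh hnbot
    · simp only [hh, Head.toChoice] at hhead
      have hba : b = a := by
        rcases hhead with h | h
        · exact absurd h (by simp)
        · exact Head.choice.inj h
      subst hba
      rw [hh] at hnom
      exact ⟨head_mem_A hP hr hh, hnom⟩

def JY (P : Program α) (A X Jx : Set α) : Set (MAtom α) :=
  MAtom.base '' Jx ∪ MAtom.ko '' PiAc P A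
    ∪ MAtom.ap '' {r ∈ P | bodySat X r ∧ r.pos ⊆ Jx}
    ∪ MAtom.bl '' {r ∈ P | ¬ bodySat X r}

variable {X Jx : Set α}

@[simp] lemma base_mem_JY : MAtom.base a ∈ JY P A X Jx ↔ a ∈ Jx := by simp [JY]
@[simp] lemma ko_mem_JY : MAtom.ko r ∈ JY P A X Jx ↔ r ∈ PiAc P A := by simp [JY]
@[simp] lemma ap_mem_JY :
    MAtom.ap r ∈ JY P A X Jx ↔ r ∈ P ∧ bodySat X r ∧ r.pos ⊆ Jx := by simp [JY]; tauto
@[simp] lemma bl_mem_JY : MAtom.bl r ∈ JY P A X Jx ↔ r ∈ P ∧ ¬ bodySat X r := by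
  simp [JY]
@[simp] lemma abp_notMem_JY : MAtom.abp r ∉ JY P A X Jx := by simp [JY]
@[simp] lemma abc_notMem_JY : MAtom.abc a ∉ JY P A X Jx := by simp [JY]
@[simp] lemma abl_notMem_JY : MAtom.abl a ∉ JY P A X Jx := by simp [JY]

end Helpers6
section Helpers7
variable {α : Type u} {P : Program α} {𝒜 A Ihat : Set α} {Y : Set (MAtom α)}
  {a : α} {r : Rule α}

lemma Y_ko (hnorm : IsNormal P) (hY : Y ∈ AS (TT P 𝒜 A Ihat))
    (hm : MAtom.ko r ∈ Y) : r ∈ PiAc P A := by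
  obtain ⟨r', hr', hhead, hb, hposs⟩ := support hY hm
  rcases hr' with (((hm' | hm') | hm') | hm') | hm'
  · obtain ⟨rr, hrr, h1 | h2 | ⟨b, hbp, h3⟩ | ⟨b, hbn, h4⟩⟩ := hm'
    · subst h1
      rcases normal_head hnorm hrr with hh | ⟨b, hh⟩ <;>
        rw [hh] at hhead <;> simp [liftHead] at hhead
    · subst h2; simp at hhead
    · subst h3; simp at hhead
    · subst h4; simp at hhead
  · obtain ⟨rr, hrc, h1 | ⟨b, hhb, h2 | h3⟩ | ⟨hhb, h4⟩⟩ := hm'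
    · subst h1
      simp only [Head.atom.injEq, MAtom.ko.injEq, reduceCtorEq, or_false] at hhead
      subst hhead; exact hrc
    · subst h2; simp at hhead
    · subst h3; simp at hhead
    · subst h4; simp at hhead
  · obtain ⟨b, hbA, h1 | h2⟩ := hm' <;> subst ‹_› <;> simp at hhead
  · obtain ⟨b, hbA, h1 | h2⟩ := hm' <;> subst ‹_› <;> simp at hhead
  · obtain ⟨b, hbq, h1⟩ | ⟨b, hbq, h1⟩ := hm' <;> subst h1 <;> simp at hhead

lemma Y_base (hnorm : IsNormal P) (hP : ProgramOver P 𝒜)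
    (hY : Y ∈ AS (TT P 𝒜 A Ihat)) (habl : ∀ b ∈ 𝒜, MAtom.abl b ∉ Y)
    (hm : MAtom.base a ∈ Y) : a ∈ 𝒜 := by
  obtain ⟨r', hr', hhead, hb, hposs⟩ := support hY hm
  rcases hr' with (((hm' | hm') | hm') | hm') | hm'
  · obtain ⟨rr, hrr, h1 | h2 | ⟨b, hbp, h3⟩ | ⟨b, hbn, h4⟩⟩ := hm'
    · subst h1
      rcases normal_head hnorm hrr with hh | ⟨b, hh⟩ <;>
        rw [hh] at hhead <;> simp [liftHead] at hhead
      subst hhead; exact head_mem_A hP hrr hh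
    · subst h2; simp at hhead
    · subst h3; simp at hhead
    · subst h4; simp at hhead
  · obtain ⟨rr, hrc, h1 | ⟨b, hhb, h2 | h3⟩ | ⟨hhb, h4⟩⟩ := hm'
    · subst h1; simp at hhead
    · subst h2
      simp only [Head.choice.injEq, MAtom.base.injEq, reduceCtorEq, false_or] at hhead
      subst hhead; exact head_mem_A hP hrc.1 hhb
    · subst h3; simp at hhead
    · subst h4; simp at hhead
  · obtain ⟨b, hbA, h1 | h2⟩ := hm'
    · subst h1
      simp only [Head.choice.injEq, MAtom.base.injEq, reduceCtorEq, false_or] at hhead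
      subst hhead; exact hbA.1
    · subst h2; simp at hhead
  · obtain ⟨b, hbA, h1 | h2⟩ := hm'
    · subst h1; simp at hhead
    · subst h2
      simp only [Head.atom.injEq, MAtom.base.injEq, reduceCtorEq, or_false] at hhead
      exact absurd (hb.1 rfl) (habl b hbA)
  · obtain ⟨b, hbq, h1⟩ | ⟨b, hbq, h1⟩ := hm' <;> subst h1 <;> simp at hhead

lemma Y_ap (hnorm : IsNormal P) (hP : ProgramOver P 𝒜)
    (hY : Y ∈ AS (TT P 𝒜 A Ihat)) (hm : MAtom.ap r ∈ Y) :
    r ∈ P ∧ bodySat {a ∈ 𝒜 | MAtom.base a ∈ Y} r := by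
  obtain ⟨r', hr', hhead, hb, hposs⟩ := support hY hm
  rcases hr' with (((hm' | hm') | hm') | hm') | hm'
  · obtain ⟨rr, hrr, h1 | h2 | ⟨b, hbp, h3⟩ | ⟨b, hbn, h4⟩⟩ := hm'
    · subst h1
      rcases normal_head hnorm hrr with hh | ⟨b, hh⟩ <;>
        rw [hh] at hhead <;> simp [liftHead] at hhead
    · subst h2
      simp only [Head.atom.injEq, MAtom.ap.injEq, reduceCtorEq, or_false] at hhead
      subst hhead
      refine ⟨hrr, fun b hb' => ⟨pos_mem_A hP hrr hb', hb.1 ⟨b, hb', rfl⟩⟩,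
        fun b hb' hbX => hb.2.1 (MAtom.base b) ⟨b, hb', rfl⟩ hbX.2, ?_⟩
      rw [(hnorm _ hrr).2]; simp
    · subst h3; simp at hhead
    · subst h4; simp at hhead
  · obtain ⟨rr, hrc, h1 | ⟨b, hhb, h2 | h3⟩ | ⟨hhb, h4⟩⟩ := hm' <;>
      subst ‹_› <;> simp at hhead
  · obtain ⟨b, hbA, h1 | h2⟩ := hm' <;> subst ‹_› <;> simp at hhead
  · obtain ⟨b, hbA, h1 | h2⟩ := hm' <;> subst ‹_› <;> simp at hhead
  · obtain ⟨b, hbq, h1⟩ | ⟨b, hbq, h1⟩ := hm' <;> subst h1 <;> simp at hhead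

lemma Y_bl (hnorm : IsNormal P) (hP : ProgramOver P 𝒜)
    (hY : Y ∈ AS (TT P 𝒜 A Ihat)) (hm : MAtom.bl r ∈ Y) :
    r ∈ P ∧ ¬ bodySat {a ∈ 𝒜 | MAtom.base a ∈ Y} r := by
  obtain ⟨r', hr', hhead, hb, hposs⟩ := support hY hm
  rcases hr' with (((hm' | hm') | hm') | hm') | hm'
  · obtain ⟨rr, hrr, h1 | h2 | ⟨b, hbp, h3⟩ | ⟨b, hbn, h4⟩⟩ := hm'
    · subst h1
      rcases normal_head hnorm hrr with hh | ⟨b, hh⟩ <;>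
        rw [hh] at hhead <;> simp [liftHead] at hhead
    · subst h2; simp at hhead
    · subst h3
      simp only [Head.atom.injEq, MAtom.bl.injEq, reduceCtorEq, or_false] at hhead
      subst hhead
      refine ⟨hrr, fun hbs => ?_⟩
      exact hb.2.1 (MAtom.base b) rfl (hbs.1 hbp).2
    · subst h4
      simp only [Head.atom.injEq, MAtom.bl.injEq, reduceCtorEq, or_false] at hhead
      subst hhead
      refine ⟨hrr, fun hbs => ?_⟩
      exact hbs.2.1 b hbn ⟨neg_mem_A hP hrr hbn, hb.2.2 rfl⟩
  · obtain ⟨rr, hrc, h1 | ⟨b, hhb, h2 | h3⟩ | ⟨hhb, h4⟩⟩ := hm' <;>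
      subst ‹_› <;> simp at hhead
  · obtain ⟨b, hbA, h1 | h2⟩ := hm' <;> subst ‹_› <;> simp at hhead
  · obtain ⟨b, hbA, h1 | h2⟩ := hm' <;> subst ‹_› <;> simp at hhead
  · obtain ⟨b, hbq, h1⟩ | ⟨b, hbq, h1⟩ := hm' <;> subst h1 <;> simp at hhead

end Helpers7
section Helpers8
variable {α : Type u} {P : Program α} {𝒜 A Ihat : Set α} {Y : Set (MAtom α)}
  {a : α} {r : Rule α}

lemma Yko' (hY : Y ∈ AS (TT P 𝒜 A Ihat)) (hrc : r ∈ PiAc P A) : MAtom.ko r ∈ Y :=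
  hY.1 _ (memTT_TP ⟨r, hrc, Or.inl rfl⟩) (by simp [bodySat])

lemma Yin (hY : Y ∈ AS (TT P 𝒜 A Ihat)) (ha : a ∈ Ihat) : MAtom.base a ∈ Y := by
  by_contra h
  exact hY.1 _ (memTT_qm (Or.inl ⟨a, ha, rfl⟩))
    ⟨by simp, by rintro x rfl; exact h, by simp⟩

lemma Yout (hY : Y ∈ AS (TT P 𝒜 A Ihat)) (ha : a ∈ (𝒜 \ A) \ Ihat)
    (h : MAtom.base a ∈ Y) : False :=
  hY.1 _ (memTT_qm (Or.inr ⟨a, ha, rfl⟩))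
    ⟨Set.singleton_subset_iff.2 h, by simp, by simp⟩

lemma Yap' (hnorm : IsNormal P) (hP : ProgramOver P 𝒜)
    (hY : Y ∈ AS (TT P 𝒜 A Ihat)) (hr : r ∈ P)
    (hb : bodySat {a ∈ 𝒜 | MAtom.base a ∈ Y} r) : MAtom.ap r ∈ Y := by
  have := hY.1 _ (memTT_meta ⟨r, hr, Or.inr (Or.inl rfl)⟩) ⟨?_, ?_, ?_⟩
  · exact this
  · rintro - ⟨b, hb', rfl⟩
    exact (hb.1 hb').2
  · rintro - ⟨b, hb', rfl⟩ hbY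
    exact hb.2.1 b hb' ⟨neg_mem_A hP hr hb', hbY⟩
  · rw [(hnorm r hr).2]; simp

lemma Ybl' (hnorm : IsNormal P) (hP : ProgramOver P 𝒜)
    (hY : Y ∈ AS (TT P 𝒜 A Ihat)) (hr : r ∈ P)
    (hnb : ¬ bodySat {a ∈ 𝒜 | MAtom.base a ∈ Y} r) : MAtom.bl r ∈ Y := by
  set X := {a ∈ 𝒜 | MAtom.base a ∈ Y} with hXdef
  by_cases hps : r.pos ⊆ X
  · have hex : ∃ b ∈ r.neg, b ∈ X := by
      by_contra hno
      push_neg at hno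
      exact hnb ⟨hps, hno, by rw [(hnorm r hr).2]; simp⟩
    obtain ⟨b, hbn, hbX⟩ := hex
    exact hY.1 _ (memTT_meta ⟨r, hr, Or.inr (Or.inr (Or.inr ⟨b, hbn, rfl⟩))⟩)
      ⟨by simp, by simp, Set.singleton_subset_iff.2 hbX.2⟩
  · obtain ⟨b, hbp, hbX⟩ := Set.not_subset.1 hps
    have hbY : MAtom.base b ∉ Y := fun h => hbX ⟨pos_mem_A hP hr hbp, h⟩
    exact hY.1 _ (memTT_meta ⟨r, hr, Or.inr (Or.inr (Or.inl ⟨b, hbp, rfl⟩))⟩)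
      ⟨by simp, by rintro x rfl; exact hbY, by simp⟩

end Helpers8
section Helpers9
variable {α : Type u} {P : Program α} {𝒜 A Ihat : Set α}

lemma part2 (hnorm : IsNormal P) (hP : ProgramOver P 𝒜)
    (hIhat : Ihat ∈ AS (omitA P A)) (Y : Set (MAtom α))
    (hY : Y ∈ AS (TT P 𝒜 A Ihat)) (hab : Y ∩ AB P 𝒜 A = ∅) :
    {a ∈ 𝒜 | MAtom.base a ∈ Y} ∈ AS (P ∪ queryObj (𝒜 \ A) Ihat) := by
  set X := {a ∈ 𝒜 | MAtom.base a ∈ Y} with hXdef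
  have hnoAB : ∀ m ∈ AB P 𝒜 A, m ∉ Y := fun m hm hmY =>
    Set.eq_empty_iff_forall_notMem.1 hab m ⟨hmY, hm⟩
  have habp : ∀ r ∈ PiAc P A, MAtom.abp r ∉ Y := fun r hr =>
    hnoAB _ (Or.inl (Or.inl ⟨r, hr, rfl⟩))
  have habc : ∀ a ∈ 𝒜 \ A, MAtom.abc a ∉ Y := fun a ha =>
    hnoAB _ (Or.inl (Or.inr ⟨a, ha, rfl⟩))
  have habl : ∀ a ∈ 𝒜, MAtom.abl a ∉ Y := fun a ha =>
    hnoAB _ (Or.inr ⟨a, ha, rfl⟩)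
  -- X is a model
  have hXmod : isModel X (P ∪ queryObj (𝒜 \ A) Ihat) := by
    intro r hr hb
    rcases hr with hr | hr
    · have hap : MAtom.ap r ∈ Y := Yap' hnorm hP hY hr hb
      rcases normal_head hnorm hr with hh | ⟨a, hh⟩
      · rw [hh]
        by_cases hrc : r ∈ PiAc P A
        · exact habp r hrc (hY.1 _ (memTT_TP ⟨r, hrc, Or.inr (Or.inr ⟨hh, rfl⟩)⟩)
            ⟨Set.singleton_subset_iff.2 hap, by simp, by simp⟩)
        · have := hY.1 _ (memTT_meta ⟨r, hr, Or.inl rfl⟩)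
            ⟨Set.singleton_subset_iff.2 hap,
             by rintro x rfl; exact fun h => hrc (Y_ko hnorm hY h), by simp⟩
          rw [hh] at this
          exact this
      · rw [hh]
        refine ⟨head_mem_A hP hr hh, ?_⟩
        by_cases hrc : r ∈ PiAc P A
        · by_contra hbaY
          exact habp r hrc
            (hY.1 _ (memTT_TP ⟨r, hrc, Or.inr (Or.inl ⟨a, hh, Or.inr rfl⟩)⟩)
              ⟨Set.singleton_subset_iff.2 hap, by rintro x rfl; exact hbaY, by simp⟩)
        · have := hY.1 _ (memTT_meta ⟨r, hr, Or.inl rfl⟩)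
            ⟨Set.singleton_subset_iff.2 hap,
             by rintro x rfl; exact fun h => hrc (Y_ko hnorm hY h), by simp⟩
          rw [hh] at this
          exact this
    · rcases hr with ⟨a, ha, rfl⟩ | ⟨a, ha, rfl⟩
      · exact hb.2.1 a rfl ⟨(Ihat_sub hnorm hP hIhat ha).1, Yin hY ha⟩
      · exact Yout hY ha (hb.1 rfl).2
  refine ⟨hXmod, fun Jx hJx hred => ?_⟩
  -- JY ⊆ Y
  have hJY_sub : JY P A X Jx ⊆ Y := by
    rintro m (((⟨a, ha, rfl⟩ | ⟨r, hr, rfl⟩) | ⟨r, ⟨hr, hb, -⟩, rfl⟩)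
      | ⟨r, ⟨hr, hnb⟩, rfl⟩)
    · exact (hJx ha).2
    · exact Yko' hY hr
    · exact Yap' hnorm hP hY hr hb
    · exact Ybl' hnorm hP hY hr hnb
  -- JY satisfies the reduct
  have hsatJ : satReduct (JY P A X Jx) Y (TT P 𝒜 A Ihat) := by
    intro m hm hb hbj
    rcases hm with (((hm | hm) | hm) | hm) | hm
    · obtain ⟨rr, hrr, h1 | h2 | ⟨b, hbp, h3⟩ | ⟨b, hbn, h4⟩⟩ := hm
      · subst h1
        have hap : MAtom.ap rr ∈ Y := hb.1 rfl
        have hbX : bodySat X rr := (Y_ap hnorm hP hY hap).2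
        have hposJ : rr.pos ⊆ Jx := (ap_mem_JY.1 (hbj.1 rfl)).2.2
        have hnegJ : ∀ b ∈ rr.neg, b ∉ Jx := fun b hb' hbJ =>
          hbX.2.1 b hb' (hJx hbJ)
        rcases normal_head hnorm hrr with hh | ⟨a, hh⟩
        · have hf : False := by
            have := hXmod rr (Or.inl hrr) hbX
            rw [hh] at this
            exact this
          exact hf.elim
        · rw [hh]
          show MAtom.base a ∈ JY P A X Jx
          rw [base_mem_JY]
          have := hred rr (Or.inl hrr) hbX ⟨hposJ, hnegJ⟩
          rw [hh] at this
          exact this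
      · subst h2
        have hbX : bodySat X rr := by
          refine ⟨fun b hb' => ⟨pos_mem_A hP hrr hb', hb.1 ⟨b, hb', rfl⟩⟩,
            fun b hb' hbX' => hb.2.1 (MAtom.base b) ⟨b, hb', rfl⟩ hbX'.2, ?_⟩
          rw [(hnorm rr hrr).2]; simp
        have hposJ : rr.pos ⊆ Jx := fun b hb' => by
          have := hbj.1 ⟨b, hb', rfl⟩
          rwa [base_mem_JY] at this
        show MAtom.ap rr ∈ JY P A X Jx
        rw [ap_mem_JY]
        exact ⟨hrr, hbX, hposJ⟩
      · subst h3
        have hbY : MAtom.base b ∉ Y := hb.2.1 _ rfl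
        show MAtom.bl rr ∈ JY P A X Jx
        rw [bl_mem_JY]
        exact ⟨hrr, fun hbs => hbY (hbs.1 hbp).2⟩
      · subst h4
        have hbY : MAtom.base b ∈ Y := hb.2.2 rfl
        show MAtom.bl rr ∈ JY P A X Jx
        rw [bl_mem_JY]
        exact ⟨hrr, fun hbs => hbs.2.1 b hbn ⟨neg_mem_A hP hrr hbn, hbY⟩⟩
    · obtain ⟨rr, hrc, h1 | ⟨b, hhb, h2 | h3⟩ | ⟨hhb, h4⟩⟩ := hm
      · subst h1
        show MAtom.ko rr ∈ JY P A X Jx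
        rw [ko_mem_JY]; exact hrc
      · subst h2
        intro hbY
        have hap : MAtom.ap rr ∈ Y := hb.1 rfl
        have hbX : bodySat X rr := (Y_ap hnorm hP hY hap).2
        have hposJ : rr.pos ⊆ Jx := (ap_mem_JY.1 (hbj.1 rfl)).2.2
        have hnegJ : ∀ c ∈ rr.neg, c ∉ Jx := fun c hc' hcJ =>
          hbX.2.1 c hc' (hJx hcJ)
        show MAtom.base b ∈ JY P A X Jx
        rw [base_mem_JY]
        have := hred rr (Or.inl hrc.1) hbX ⟨hposJ, hnegJ⟩
        rw [hhb] at this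
        exact this
      · subst h3
        exact absurd (hY.1 _ (memTT_TP ⟨rr, hrc, Or.inr (Or.inl ⟨b, hhb, Or.inr rfl⟩)⟩) hb)
          (habp rr hrc)
      · subst h4
        exact absurd (hY.1 _ (memTT_TP ⟨rr, hrc, Or.inr (Or.inr ⟨hhb, rfl⟩)⟩) hb)
          (habp rr hrc)
    · obtain ⟨b, hbA, h1 | h2⟩ := hm
      · subst h1
        intro hbY
        have : MAtom.abc b ∈ Y := by
          refine hY.1 _ (memTT_TC ⟨b, hbA, Or.inr rfl⟩) ⟨?_, by simp, by simp⟩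
          intro x hx
          rcases hx with rfl | hx
          · exact hbY
          · exact hb.1 hx
        exact absurd this (habc b hbA)
      · subst h2
        exact absurd (hY.1 _ (memTT_TC ⟨b, hbA, Or.inr rfl⟩) hb) (habc b hbA)
    · obtain ⟨b, hbA, h1 | h2⟩ := hm
      · subst h1
        intro hblY
        exact absurd hblY (habl b hbA)
      · subst h2
        exact absurd (hb.1 rfl) (habl b hbA)
    · obtain ⟨b, hbq, h1⟩ | ⟨b, hbq, h1⟩ := hm
      · subst h1
        exact absurd (Yin hY hbq) (hb.2.1 _ rfl)
      · subst h1
        exact (Yout hY hbq (hb.1 rfl)).elim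
  have hJYeq : JY P A X Jx = Y := hY.2 _ hJY_sub hsatJ
  refine Set.Subset.antisymm hJx (fun a ha => ?_)
  have : MAtom.base a ∈ JY P A X Jx := by rw [hJYeq]; exact ha.2
  rwa [base_mem_JY] at this

end Helpers9

/-- correspondence between concreteness checking and the
debugging translation: for a normal logic program `P` over a finite set `𝒜`
of atoms, `A ⊆ 𝒜` and an answer set `Î` of `omit(P, A)`:
(1) if `X ∈ AS(P ∪ Q_Î^Ā)` then
`X ∪ {ko(n_r) | r ∈ Π_A^c} ∪ {ap(n_r) | r ∈ P^X} ∪ {bl(n_r) | r ∈ P \ P^X}` is an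
answer set of `T_meta[P] ∪ T_P[P] ∪ T_C[P,𝒜] ∪ T_A[𝒜] ∪ Q_Î^Ā`;
(2) if `Y` is an answer set of the latter program with `Y ∩ AB_A(P) = ∅`, then
`Y ∩ 𝒜 ∈ AS(P ∪ Q_Î^Ā)`. -/
theorem debug_translation_correspondence {α : Type u} (P : Program α)
    (𝒜 A Ihat : Set α)
    (h𝒜 : 𝒜.Finite) (hnorm : IsNormal P) (hP : ProgramOver P 𝒜)
    (hA : A ⊆ 𝒜) (hIhat : Ihat ∈ AS (omitA P A)) :
    (∀ X ∈ AS (P ∪ queryObj (𝒜 \ A) Ihat),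
      (MAtom.base '' X ∪ MAtom.ko '' PiAc P A
        ∪ MAtom.ap '' {r ∈ P | bodySat X r}
        ∪ MAtom.bl '' {r ∈ P | ¬ bodySat X r})
        ∈ AS (Tmeta P ∪ TP P A ∪ TC P 𝒜 A ∪ TA 𝒜 ∪ queryMeta (𝒜 \ A) Ihat)) ∧
    (∀ Y ∈ AS (Tmeta P ∪ TP P A ∪ TC P 𝒜 A ∪ TA 𝒜 ∪ queryMeta (𝒜 \ A) Ihat),
      Y ∩ AB P 𝒜 A = ∅ →
        {a ∈ 𝒜 | MAtom.base a ∈ Y} ∈ AS (P ∪ queryObj (𝒜 \ A) Ihat)) := by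
  refine ⟨fun X hX => ?_, fun Y hY hab => part2 hnorm hP hIhat Y hY hab⟩
  exact ⟨YX_model hnorm hP hX, YX_min hnorm hX⟩

end ASP
end
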